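/- The Jeffreys divergence dominates four times the Jensen-Shannon divergence: for discrete probability vectors p, q with strictly positive entries, J(p,q) = Σᵢ (pᵢ-qᵢ)·log(pᵢ/qᵢ) ≥ 4·JS(p,q), where JS(p,q) = Σᵢ [ (pᵢ log pᵢ + qᵢ log qᵢ)/2 - ((pᵢ+qᵢ)/2) log((pᵢ+qᵢ)/2) ]. -/
import Mathlib

open Real in
lemma pointwise_jeff (a b : ℝ) (ha : 0 < a) (hb : 0 < b) :
    4 * ((a * Real.log a + b * Real.log b) / 2 -
      ((a + b) / 2) * Real.log ((a + b) / 2)) ≤ (a - b) * Real.log (a / b) := by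
  have hab : 0 < a + b := by linarith
  have h1 : Real.log ((a + b) / 2) = Real.log (a + b) - Real.log 2 :=
    Real.log_div hab.ne' two_ne_zero
  have h2 : Real.log (a / b) = Real.log a - Real.log b :=
    Real.log_div ha.ne' hb.ne'
  have h3 : Real.log a + Real.log b + 2 * Real.log 2 ≤ 2 * Real.log (a + b) := by
    have hle : Real.log (4 * (a * b)) ≤ Real.log ((a + b) ^ 2) :=
      Real.log_le_log (by positivity) (by nlinarith [sq_nonneg (a - b)])
    have e1 : Real.log ((a + b) ^ 2) = 2 * Real.log (a + b) := by
      rw [Real.log_pow]; push_cast; ring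
    have e2 : Real.log (4 * (a * b)) = 2 * Real.log 2 + (Real.log a + Real.log b) := by
      rw [Real.log_mul (by norm_num) (by positivity), Real.log_mul ha.ne' hb.ne',
        show (4 : ℝ) = 2 ^ 2 by norm_num, Real.log_pow]
      push_cast; ring
    rw [e1] at hle; rw [e2] at hle; linarith
  rw [h1, h2]
  nlinarith [mul_nonneg hab.le (by linarith :
    (0:ℝ) ≤ 2 * Real.log (a + b) - Real.log a - Real.log b - 2 * Real.log 2)]

open Real in
theorem jeffreys_ge_four_jensen_shannon (d : ℕ) (p q : Fin d → ℝ)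
    (hp : ∀ i, 0 < p i) (hq : ∀ i, 0 < q i)
    (hps : ∑ i, p i = 1) (hqs : ∑ i, q i = 1) :
    ∑ i, (p i - q i) * Real.log (p i / q i) ≥
      4 * ∑ i, ((p i * Real.log (p i) + q i * Real.log (q i)) / 2 -
        ((p i + q i) / 2) * Real.log ((p i + q i) / 2)) := by
  rw [Finset.mul_sum]
  exact Finset.sum_le_sum fun i _ => pointwise_jeff (p i) (q i) (hp i) (hq i)
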